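/- arXiv:0710.1147 — 2 statements merged into one kernel-verified Lean document; each statement's English description precedes it below -/
import Mathlib

section
/- Under conditions (2), for every k ≥ 3 and every z ∈ ℂ with |z| = r_k one has log|h(z)| ≤ 3 n_{k−1} log r_k, i.e. |h(z)| ≤ r_k^{3 n_{k−1}}. -/
/-!
On `|z| = r_k` the factors of `h` with `j < k` are at most `2 r_k^{n_j}`, the factor with
`j = k` is at most `2`, and since `r_j ≥ 2^{j-k} r_k` the factors with `j > k` are at most
`1 + 2^{-(j-k)}`, whose product is bounded by `e^2`. Hence every partial product, and so `h(z)`,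
is at most `2^k e^2 r_k^{n_1 + ⋯ + n_{k-1}} ≤ 2^k e^2 r_k^{2 n_{k-1}}`. Finally `n_{k-1} ≥ 16`
and `r_k ≥ 2^{k-1}` give `2^k e^2 ≤ r_k^{n_{k-1}}`.
-/

open Filter Topology

lemma norm_one_add_div_pow_le (z : ℂ) {ρ : ℝ} (hρ : 0 < ρ) (N : ℕ) :
    ‖1 + (z / (ρ : ℂ)) ^ N‖ ≤ 1 + (‖z‖ / ρ) ^ N :=
  calc ‖1 + (z / (ρ : ℂ)) ^ N‖ ≤ ‖(1 : ℂ)‖ + ‖(z / (ρ : ℂ)) ^ N‖ := norm_add_le _ _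
    _ = 1 + (‖z‖ / ρ) ^ N := by
      rw [norm_one, norm_pow, norm_div, Complex.norm_of_nonneg hρ.le]

lemma sum_Ioc_half_pow_sub_le_two (k m : ℕ) :
    ∑ j ∈ Finset.Ioc k m, (1 / 2 : ℝ) ^ (j - k) ≤ 2 := by
  rw [← Finset.Icc_add_one_left_eq_Ioc, ← Finset.Ico_add_one_right_eq_Icc,
    Finset.sum_Ico_eq_sum_range]
  calc ∑ i ∈ Finset.range (m + 1 - (k + 1)), (1 / 2 : ℝ) ^ (k + 1 + i - k)
      ≤ ∑ i ∈ Finset.range (m + 1 - (k + 1)), (1 / 2 : ℝ) ^ i :=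
        Finset.sum_le_sum fun i _ => pow_le_pow_of_le_one (by norm_num) (by norm_num) (by omega)
    _ ≤ 2 := sum_geometric_two_le _

lemma two_pow_mul_exp_two_le_pow {x : ℝ} {k N : ℕ} (hk : 2 ≤ k) (hx : 2 ^ (k - 1) ≤ x)
    (hN : 16 ≤ N) : 2 ^ k * Real.exp 2 ≤ x ^ N := by
  have hexp : Real.exp 2 ≤ 2 ^ 3 := by
    rw [show (2 : ℝ) = 1 + 1 by norm_num, Real.exp_add]
    nlinarith [Real.exp_one_lt_d9, Real.exp_pos 1]
  calc 2 ^ k * Real.exp 2 ≤ 2 ^ k * 2 ^ 3 := by gcongr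
    _ = 2 ^ (k + 3) := by rw [pow_add]
    _ ≤ 2 ^ ((k - 1) * N) :=
      pow_le_pow_right₀ (by norm_num) (by have := Nat.mul_le_mul_left (k - 1) hN; omega)
    _ = (2 ^ (k - 1)) ^ N := pow_mul _ _ _
    _ ≤ x ^ N := by gcongr

section Doubling

variable {r : ℕ → ℝ} (hr : ∀ k, 2 ≤ k → 2 * r (k - 1) ≤ r k)
include hr

lemma two_pow_mul_le_of_doubling {i : ℕ} (hi : 1 ≤ i) (m : ℕ) : 2 ^ m * r i ≤ r (i + m) := by
  induction m with
  | zero => simp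
  | succ m ih =>
    have hstep := hr (i + m + 1) (by omega)
    rw [Nat.add_sub_cancel] at hstep
    rw [pow_succ', mul_assoc, ← add_assoc]
    linarith

variable (hr1 : 1 ≤ r 1)
include hr1

lemma two_pow_pred_le_of_doubling {i : ℕ} (hi : 1 ≤ i) : 2 ^ (i - 1) ≤ r i := by
  have := two_pow_mul_le_of_doubling hr le_rfl (i - 1)
  rw [Nat.add_sub_cancel' hi] at this
  nlinarith [one_le_pow₀ (n := i - 1) (by norm_num : (1 : ℝ) ≤ 2)]

lemma one_le_of_doubling {i : ℕ} (hi : 1 ≤ i) : 1 ≤ r i :=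
  (one_le_pow₀ (by norm_num)).trans (two_pow_pred_le_of_doubling hr hr1 hi)

lemma div_le_half_pow_of_doubling {k j : ℕ} (hk : 1 ≤ k) (hkj : k ≤ j) :
    r k / r j ≤ (1 / 2) ^ (j - k) := by
  have hj : 0 < r j := (one_le_of_doubling hr hr1 (hk.trans hkj)).trans_lt' one_pos
  have := two_pow_mul_le_of_doubling hr hk (j - k)
  rw [Nat.add_sub_cancel' hkj] at this
  rw [div_le_iff₀ hj, one_div_pow, one_div_mul_eq_div, le_div_iff₀ (by positivity)]
  linarith

variable {z : ℂ} {k : ℕ} (hk : 1 ≤ k) (hz : ‖z‖ = r k)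
include hk hz

lemma norm_factor_le_two_mul_pow {j : ℕ} (hj : 1 ≤ j) (N : ℕ) :
    ‖1 + (z / (r j : ℂ)) ^ N‖ ≤ 2 * r k ^ N := by
  have hrj := one_le_of_doubling hr hr1 hj
  have hrk := one_le_of_doubling hr hr1 hk
  have : (r k / r j) ^ N ≤ r k ^ N := by
    gcongr
    exact div_le_self (by linarith) hrj
  have hnorm := norm_one_add_div_pow_le z (ρ := r j) (by linarith) N
  rw [hz] at hnorm
  linarith [one_le_pow₀ (n := N) hrk]

lemma norm_factor_self (N : ℕ) : ‖1 + (z / (r k : ℂ)) ^ N‖ ≤ 2 := by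
  have hrk := one_le_of_doubling hr hr1 hk
  have := norm_one_add_div_pow_le z (ρ := r k) (by linarith) N
  rwa [hz, div_self (by linarith), one_pow, one_add_one_eq_two] at this

lemma norm_factor_le_of_lt {j N : ℕ} (hkj : k < j) (hN : 1 ≤ N) :
    ‖1 + (z / (r j : ℂ)) ^ N‖ ≤ 1 + (1 / 2) ^ (j - k) := by
  have hrk := one_le_of_doubling hr hr1 hk
  have hq := div_le_half_pow_of_doubling hr hr1 hk hkj.le
  have hq1 : r k / r j ≤ 1 := hq.trans (pow_le_one₀ (by norm_num) (by norm_num))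
  have hrj := one_le_of_doubling hr hr1 (hk.trans hkj.le)
  have hnorm := norm_one_add_div_pow_le z (ρ := r j) (by linarith) N
  rw [hz] at hnorm
  linarith [pow_le_of_le_one (div_nonneg (by linarith) (by linarith)) hq1 (by omega : N ≠ 0)]

variable {n : ℕ → ℕ}

lemma prod_norm_factor_head_le :
    ∏ j ∈ Finset.Icc 1 k, ‖1 + (z / (r j : ℂ)) ^ n j‖
      ≤ 2 ^ k * r k ^ ∑ j ∈ Finset.Icc 1 (k - 1), n j := by
  obtain ⟨K, rfl⟩ : ∃ K, k = K + 1 := ⟨k - 1, by omega⟩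
  rw [Nat.add_sub_cancel]
  calc ∏ j ∈ Finset.Icc 1 (K + 1), ‖1 + (z / (r j : ℂ)) ^ n j‖
      = (∏ j ∈ Finset.Icc 1 K, ‖1 + (z / (r j : ℂ)) ^ n j‖)
          * ‖1 + (z / (r (K + 1) : ℂ)) ^ n (K + 1)‖ := Finset.prod_Icc_succ_top (by omega) _
    _ ≤ (∏ j ∈ Finset.Icc 1 K, 2 * r (K + 1) ^ n j) * 2 := by
      refine mul_le_mul (Finset.prod_le_prod (fun _ _ => norm_nonneg _) fun j hj => ?_)
        (norm_factor_self hr hr1 hk hz _) (norm_nonneg _) (Finset.prod_nonneg fun _ _ =>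
          mul_nonneg zero_le_two (pow_nonneg (zero_le_one.trans (one_le_of_doubling hr hr1 hk)) _))
      rw [Finset.mem_Icc] at hj
      exact norm_factor_le_two_mul_pow hr hr1 hk hz hj.1 (n j)
    _ = 2 ^ (K + 1) * r (K + 1) ^ ∑ j ∈ Finset.Icc 1 K, n j := by
      rw [Finset.prod_mul_distrib, Finset.prod_const, Nat.card_Icc, Nat.add_sub_cancel,
        Finset.prod_pow_eq_pow_sum]
      ring

lemma prod_norm_factor_tail_le (hn : ∀ j, 1 ≤ j → 1 ≤ n j) (m : ℕ) :
    ∏ j ∈ Finset.Ioc k m, ‖1 + (z / (r j : ℂ)) ^ n j‖ ≤ Real.exp 2 :=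
  calc ∏ j ∈ Finset.Ioc k m, ‖1 + (z / (r j : ℂ)) ^ n j‖
      ≤ ∏ j ∈ Finset.Ioc k m, (1 + (1 / 2 : ℝ) ^ (j - k)) :=
        Finset.prod_le_prod (fun _ _ => norm_nonneg _) fun j hj =>
          norm_factor_le_of_lt hr hr1 hk hz (Finset.mem_Ioc.1 hj).1 (hn j (by
            have := (Finset.mem_Ioc.1 hj).1; omega))
    _ ≤ Real.exp (∑ j ∈ Finset.Ioc k m, (1 / 2 : ℝ) ^ (j - k)) :=
        Real.prod_one_add_le_exp_sum _ fun _ => by positivity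
    _ ≤ Real.exp 2 := Real.exp_le_exp.2 (sum_Ioc_half_pow_sub_le_two k m)

lemma norm_partial_prod_le (hn : ∀ j, 1 ≤ j → 1 ≤ n j) {m : ℕ} (hkm : k ≤ m) :
    ‖∏ j ∈ Finset.Icc 1 m, (1 + (z / (r j : ℂ)) ^ n j)‖
      ≤ 2 ^ k * r k ^ (∑ j ∈ Finset.Icc 1 (k - 1), n j) * Real.exp 2 := by
  rw [norm_prod, show Finset.Icc 1 m = Finset.Ioc 0 m from Finset.Icc_add_one_left_eq_Ioc 0 m,
    ← Finset.prod_Ioc_consecutive _ (Nat.zero_le k) hkm,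
    show Finset.Ioc 0 k = Finset.Icc 1 k from (Finset.Icc_add_one_left_eq_Ioc 0 k).symm]
  exact mul_le_mul (prod_norm_factor_head_le hr hr1 hk hz)
    (prod_norm_factor_tail_le hr hr1 hk hz hn m)
    (Finset.prod_nonneg fun _ _ => norm_nonneg _)
    (mul_nonneg (by positivity) (pow_nonneg (zero_le_one.trans (one_le_of_doubling hr hr1 hk)) _))

end Doubling

lemma sum_Icc_pred_le_two_mul {n : ℕ → ℕ}
    (hnsum : ∀ k, 2 ≤ k → ∑ j ∈ Finset.Icc 1 (k - 1), n j ≤ n k) {k : ℕ} (hk : 3 ≤ k) :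
    ∑ j ∈ Finset.Icc 1 (k - 1), n j ≤ 2 * n (k - 1) := by
  obtain ⟨K, rfl⟩ : ∃ K, k = K + 2 := ⟨k - 2, by omega⟩
  have := hnsum (K + 1) (by omega)
  simp only [Nat.add_sub_cancel, show K + 2 - 1 = K + 1 by omega] at this ⊢
  rw [Finset.sum_Icc_succ_top (by omega)]
  omega

lemma sixteen_le_of_pow_le {r : ℕ → ℝ} {n : ℕ → ℕ} (hr1 : 1 ≤ r 1)
    (hr : ∀ k, 2 ≤ k → 2 * r (k - 1) ≤ r k) (hn : ∀ k, 1 ≤ k → 1 ≤ n k)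
    (hnr : ∀ k, 2 ≤ k → r k ^ (4 * n (k - 1)) ≤ (n k : ℝ)) {k : ℕ} (hk : 2 ≤ k) :
    16 ≤ n k := by
  have hrk : 2 ≤ r k := by
    linarith [hr k hk, one_le_of_doubling hr hr1 (by omega : 1 ≤ k - 1)]
  have : (16 : ℝ) ≤ n k :=
    calc (16 : ℝ) = 2 ^ 4 := by norm_num
      _ ≤ 2 ^ (4 * n (k - 1)) :=
        pow_le_pow_right₀ (by norm_num) (by linarith [hn (k - 1) (by omega)])
      _ ≤ r k ^ (4 * n (k - 1)) := by gcongr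
      _ ≤ n k := hnr k hk
  exact_mod_cast this

theorem log_abs_h_bound_general
    (r : ℕ → ℝ) (n : ℕ → ℕ) (h : ℂ → ℂ)
    (hnpos : ∀ k, 1 ≤ k → 1 ≤ n k)
    (hr1 : 1 ≤ r 1)
    (hr : ∀ k, 2 ≤ k → 2 * r (k - 1) ≤ r k)
    (hnsum : ∀ k, 2 ≤ k → ∑ j ∈ Finset.Icc 1 (k - 1), n j ≤ n k)
    (hnr : ∀ k, 2 ≤ k → r k ^ (4 * n (k - 1)) ≤ (n k : ℝ))
    (hh : ∀ z : ℂ, Tendsto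
      (fun m : ℕ => ∏ k ∈ Finset.Icc 1 m, (1 + (z / (r k : ℂ)) ^ (n k)))
      atTop (nhds (h z))) :
    ∀ k, 3 ≤ k → ∀ z : ℂ, ‖z‖ = r k →
      Real.log (‖h z‖) ≤ (3 * n (k - 1) : ℝ) * Real.log (r k) ∧
      ‖h z‖ ≤ r k ^ (3 * n (k - 1)) := by
  intro k hk z hz
  have hrk := one_le_of_doubling hr hr1 (by omega : 1 ≤ k)
  have hbound : ‖h z‖ ≤ r k ^ (3 * n (k - 1)) := by
    refine le_of_tendsto (hh z).norm (eventually_atTop.2 ⟨k, fun m hm => ?_⟩)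
    calc _ ≤ 2 ^ k * r k ^ (∑ j ∈ Finset.Icc 1 (k - 1), n j) * Real.exp 2 :=
          norm_partial_prod_le hr hr1 (by omega) hz hnpos hm
      _ ≤ 2 ^ k * r k ^ (2 * n (k - 1)) * Real.exp 2 := by
          gcongr
          exact sum_Icc_pred_le_two_mul hnsum hk
      _ = r k ^ (2 * n (k - 1)) * (2 ^ k * Real.exp 2) := by ring
      _ ≤ r k ^ (2 * n (k - 1)) * r k ^ n (k - 1) := by
          gcongr
          exact two_pow_mul_exp_two_le_pow (by omega)
            (two_pow_pred_le_of_doubling hr hr1 (by omega))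
            (sixteen_le_of_pow_le hr1 hr hnpos hnr (by omega))
      _ = r k ^ (3 * n (k - 1)) := by ring
  refine ⟨?_, hbound⟩
  have hlog : Real.log (r k ^ (3 * n (k - 1))) = (3 * n (k - 1) : ℝ) * Real.log (r k) := by
    rw [Real.log_pow]; push_cast; ring
  rw [← hlog]
  rcases (norm_nonneg (h z)).eq_or_lt with h0 | h0
  · rw [← h0, Real.log_zero]
    exact Real.log_nonneg (one_le_pow₀ hrk)
  · exact Real.log_le_log h0 hbound

/-- Under conditions (2), for every `k ≥ 3` and every `z` with `|z| = r_k` one has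
`log |h(z)| ≤ 3 n_{k-1} log r_k`, i.e. `|h(z)| ≤ r_k^{3 n_{k-1}}`. -/
theorem log_abs_h_bound
    (r : ℕ → ℝ) (n : ℕ → ℕ) (h : ℂ → ℂ)
    (hrpos : ∀ k, 1 ≤ k → 0 < r k)
    (hnpos : ∀ k, 1 ≤ k → 1 ≤ n k)
    (hr1 : 1 ≤ r 1)
    (hr : ∀ k, 2 ≤ k → 2 * r (k - 1) ≤ r k)
    (hnsum : ∀ k, 2 ≤ k → ∑ j ∈ Finset.Icc 1 (k - 1), n j ≤ n k)
    (hnr : ∀ k, 2 ≤ k → r k ^ (4 * n (k - 1)) ≤ (n k : ℝ))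
    (hh : ∀ z : ℂ, Tendsto
      (fun m : ℕ => ∏ k ∈ Finset.Icc 1 m, (1 + (z / (r k : ℂ)) ^ (n k)))
      atTop (nhds (h z))) :
    ∀ k, 3 ≤ k → ∀ z : ℂ, ‖z‖ = r k →
      Real.log (‖h z‖) ≤ (3 * n (k - 1) : ℝ) * Real.log (r k) ∧
      ‖h z‖ ≤ r k ^ (3 * n (k - 1)) :=
  log_abs_h_bound_general r n h hnpos hr1 hr hnsum hnr hh
end

section
/- Since h(0) = 1, there is an entire function H with z·H(z) = h(z) − 1 for all z ∈ ℂ. Let G be the entire primitive of H with G(0) = 0 and define g(z) := z·exp(G(z)). Then g is entire, g(z) = 0 if and only if z = 0 (and this zero is simple, since g'(0) = 1), one has z·g'(z) = g(z)·h(z) for all z, and for every z ≠ 0 with h(z) ≠ 0 the Newton function satisfies N_g(z) := z − g(z)/g'(z) = z(1 − 1/h(z)). -/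
open Filter Topology

/-! Since every factor of the product equals `1` at `z = 0`, `h 0 = 1`, so `H := dslope h 0` is an
entire function with `z * H z = h z - 1`. Differentiating `g z = z * exp (G z)` with `G' = H` gives
`g' z = exp (G z) * (1 + z * H z) = exp (G z) * h z`, from which every claim is algebra, using that
`exp` never vanishes. -/

theorem Complex.differentiable_dslope {E : Type*} [NormedAddCommGroup E] [NormedSpace ℂ E]
    [CompleteSpace E] {f : ℂ → E} (hf : Differentiable ℂ f) (c : ℂ) :
    Differentiable ℂ (dslope f c) := by
  rw [← differentiableOn_univ] at hf ⊢
  exact (Complex.differentiableOn_dslope Filter.univ_mem).mpr hf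

theorem mul_dslope_zero_eq_sub {𝕜 : Type*} [NontriviallyNormedField 𝕜] (f : 𝕜 → 𝕜) (z : 𝕜) :
    z * dslope f 0 z = f z - f 0 := by
  simpa using sub_smul_dslope f 0 z

theorem eq_one_of_tendsto_prod_one_add_zero_div_pow (r : ℕ → ℝ) (n : ℕ → ℕ)
    (hn : ∀ k, 1 ≤ k → n k ≠ 0) {c : ℂ}
    (hc : Tendsto (fun m : ℕ => ∏ k ∈ Finset.Icc 1 m, (1 + ((0 : ℂ) / (r k : ℂ)) ^ (n k)))
      atTop (𝓝 c)) :
    c = 1 := by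
  have hprod : ∀ m, ∏ k ∈ Finset.Icc 1 m, (1 + ((0 : ℂ) / (r k : ℂ)) ^ (n k)) = 1 := fun m =>
    Finset.prod_eq_one fun k hk => by
      rw [zero_div, zero_pow (hn k (Finset.mem_Icc.mp hk).1), add_zero]
  simp only [hprod] at hc
  exact tendsto_nhds_unique hc tendsto_const_nhds

theorem hasDerivAt_mul_cexp {G H h : ℂ → ℂ} {z : ℂ} (hG : HasDerivAt G (H z) z)
    (hH : z * H z = h z - 1) :
    HasDerivAt (fun w => w * Complex.exp (G w)) (Complex.exp (G z) * h z) z := by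
  refine ((hasDerivAt_id' z).mul hG.cexp).congr_deriv ?_
  linear_combination Complex.exp (G z) * hH

theorem newton_function_of_g_general
    (r : ℕ → ℝ) (n : ℕ → ℕ) (h : ℂ → ℂ)
    (hn : ∀ k, 1 ≤ k → k ≤ n k)
    (hdiff : Differentiable ℂ h)
    (hh : ∀ z : ℂ, Tendsto
      (fun m : ℕ => ∏ k ∈ Finset.Icc 1 m, (1 + (z / (r k : ℂ)) ^ (n k)))
      atTop (nhds (h z))) :
    ∃ H : ℂ → ℂ, Differentiable ℂ H ∧ (∀ z : ℂ, z * H z = h z - 1) ∧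
      ∀ G : ℂ → ℂ, (∀ z : ℂ, HasDerivAt G (H z) z) → G 0 = 0 →
        ∀ g : ℂ → ℂ, (∀ z : ℂ, g z = z * Complex.exp (G z)) →
          Differentiable ℂ g ∧
          (∀ z : ℂ, g z = 0 ↔ z = 0) ∧
          deriv g 0 = 1 ∧
          (∀ z : ℂ, z * deriv g z = g z * h z) ∧
          (∀ z : ℂ, z ≠ 0 → h z ≠ 0 →
            z - g z / deriv g z = z * (1 - 1 / h z)) := by
  have h0 : h 0 = 1 :=
    eq_one_of_tendsto_prod_one_add_zero_div_pow r n (fun k hk => by grind) (hh 0)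
  have hH : ∀ z, z * dslope h 0 z = h z - 1 := fun z => h0 ▸ mul_dslope_zero_eq_sub h z
  refine ⟨dslope h 0, Complex.differentiable_dslope hdiff 0, hH, fun G hG hG0 g hg => ?_⟩
  have hg' : ∀ z, HasDerivAt g (Complex.exp (G z) * h z) z := fun z =>
    funext hg ▸ hasDerivAt_mul_cexp (hG z) (hH z)
  have hderiv : ∀ z, deriv g z = Complex.exp (G z) * h z := fun z => (hg' z).deriv
  refine ⟨fun z => (hg' z).differentiableAt, fun z => by simp [hg, Complex.exp_ne_zero],
    by simp [hderiv, hG0, h0], fun z => by rw [hderiv, hg]; ring, fun z hz hhz => ?_⟩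
  rw [hderiv, hg]
  field_simp

/-- Since `h(0) = 1`, there is an entire `H` with `z·H(z) = h(z) - 1`. For any
entire primitive `G` of `H` with `G(0) = 0`, the function `g(z) = z·exp(G(z))`
is entire, vanishes exactly at `0` (with `g'(0) = 1`, so the zero is simple),
satisfies `z·g'(z) = g(z)·h(z)`, and for `z ≠ 0` with `h(z) ≠ 0` the Newton
function satisfies `N_g(z) = z - g(z)/g'(z) = z(1 - 1/h(z))`. -/
theorem newton_function_of_g
    (r : ℕ → ℝ) (n : ℕ → ℕ) (h : ℂ → ℂ)
    (hrpos : ∀ k, 1 ≤ k → 0 < r k)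
    (hrinf : Tendsto r atTop atTop)
    (hn : ∀ k, 1 ≤ k → k ≤ n k)
    (hdiff : Differentiable ℂ h)
    (hh : ∀ z : ℂ, Tendsto
      (fun m : ℕ => ∏ k ∈ Finset.Icc 1 m, (1 + (z / (r k : ℂ)) ^ (n k)))
      atTop (nhds (h z))) :
    ∃ H : ℂ → ℂ, Differentiable ℂ H ∧ (∀ z : ℂ, z * H z = h z - 1) ∧
      ∀ G : ℂ → ℂ, (∀ z : ℂ, HasDerivAt G (H z) z) → G 0 = 0 →
        ∀ g : ℂ → ℂ, (∀ z : ℂ, g z = z * Complex.exp (G z)) →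
          Differentiable ℂ g ∧
          (∀ z : ℂ, g z = 0 ↔ z = 0) ∧
          deriv g 0 = 1 ∧
          (∀ z : ℂ, z * deriv g z = g z * h z) ∧
          (∀ z : ℂ, z ≠ 0 → h z ≠ 0 →
            z - g z / deriv g z = z * (1 - 1 / h z)) :=
  newton_function_of_g_general r n h hn hdiff hh
end
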